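/- arXiv:2510.15152 — 2 statements merged into one kernel-verified Lean document; each statement's English description precedes it below -/
import Mathlib

section
/- Let f(Y) = Σ_i λ_i · E[(L_i + Q_i − Y_i − ξ)^+] over integer vectors Y with 0 ≤ Y_i ≤ B_i and Σ_i Y_i ≤ C, where λ_i > 0, L_i ≥ 0, ξ ≥ 0, and Q_i are integer-valued random variables. Then the greedy procedure that starts from Y_i = B_i and repeatedly decrements the coordinate j minimizing the marginal value λ_j · P(L_j + Q_j − ξ ≥ Y_j), until the capacity constraint Σ_i Y_i ≤ C holds, returns an optimal solution. -/
open MeasureTheory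
open scoped BigOperators

/-- The expected-tail objective `f(Y) = Σ_i λ_i E[(L_i + Q_i - Y_i - ξ)⁺]`. -/
noncomputable def etObj {n : ℕ} {Ω : Type*} [MeasurableSpace Ω] (μ : Measure Ω)
    (lam : Fin n → ℝ) (L : Fin n → ℤ) (ξ : ℤ) (Q : Fin n → Ω → ℤ)
    (Y : Fin n → ℕ) : ℝ :=
  ∑ i, lam i * ∫ ω, ((max (L i + Q i ω - (Y i : ℤ) - ξ) 0 : ℤ) : ℝ) ∂μ

/-- The marginal value `λ_j · P(L_j + Q_j - ξ ≥ y)` of the `y`-th cached block of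
conversation `j`. -/
noncomputable def marg {n : ℕ} {Ω : Type*} [MeasurableSpace Ω] (μ : Measure Ω)
    (lam : Fin n → ℝ) (L : Fin n → ℤ) (ξ : ℤ) (Q : Fin n → Ω → ℤ)
    (j : Fin n) (y : ℕ) : ℝ :=
  lam j * (μ {ω | (y : ℤ) ≤ L j + Q j ω - ξ}).toReal

/-! Writing `X_i = L_i + Q_i - ξ`, the objective telescopes: `f(Z) = f(B) + Σ λ_i P(X_i ≥ y)`,
summed over the blocks `(i, y)` with `Z_i < y ≤ B_i` that `Z` removes from `B`. The marginal
`λ_i P(X_i ≥ y)` decreases in `y`, so each greedy step removes a block that is no more costly than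
any block still kept; by induction every block the greedy removed costs at most every block it
kept. A feasible `Z` removes at least as many blocks, and exchanging the blocks on which the two
removal sets differ shows it pays at least as much. -/

open Finset

section IntegerTail

variable {Ω : Type*} [MeasurableSpace Ω] {μ : Measure Ω} [IsFiniteMeasure μ] {X : Ω → ℤ}

lemma integral_posPart_sub_eq_add_measureReal (hX : Measurable X) (y : ℤ)
    (hint : Integrable (fun ω => ((max (X ω - (y + 1)) 0 : ℤ) : ℝ)) μ) :
    ∫ ω, ((max (X ω - y) 0 : ℤ) : ℝ) ∂μ
      = ∫ ω, ((max (X ω - (y + 1)) 0 : ℤ) : ℝ) ∂μ + μ.real {ω | y + 1 ≤ X ω} := by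
  have hs : MeasurableSet {ω | y + 1 ≤ X ω} := hX measurableSet_Ici
  have hsplit : (fun ω => ((max (X ω - y) 0 : ℤ) : ℝ))
      = fun ω => ((max (X ω - (y + 1)) 0 : ℤ) : ℝ)
          + {ω | y + 1 ≤ X ω}.indicator (fun _ => 1) ω := by
    funext ω
    have hω : max (X ω - y) 0 = max (X ω - (y + 1)) 0 + if y + 1 ≤ X ω then 1 else 0 := by
      split_ifs <;> omega
    rw [hω, Set.indicator_apply]
    push_cast
    rfl
  rw [hsplit, integral_add hint ((integrable_const 1).indicator hs),
    integral_indicator_const _ hs, smul_eq_mul, mul_one]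

lemma integral_posPart_sub_eq_add_sum (hX : Measurable X)
    (hint : ∀ y : ℤ, Integrable (fun ω => ((max (X ω - y) 0 : ℤ) : ℝ)) μ)
    {z b : ℕ} (h : z ≤ b) :
    ∫ ω, ((max (X ω - z) 0 : ℤ) : ℝ) ∂μ
      = ∫ ω, ((max (X ω - b) 0 : ℤ) : ℝ) ∂μ
        + ∑ y ∈ Ioc z b, μ.real {ω | (y : ℤ) ≤ X ω} := by
  induction b, h using Nat.le_induction with
  | base => simp
  | succ b hzb ih =>
    rw [sum_Ioc_succ_top hzb, ih, integral_posPart_sub_eq_add_measureReal hX b (hint _)]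
    push_cast
    ring

end IntegerTail

theorem Finset.sum_le_sum_of_card_le_of_forall_sdiff_le {α M : Type*} [DecidableEq α]
    [AddCommMonoid M] [LinearOrder M] [IsOrderedAddMonoid M] {s t : Finset α} {c : α → M}
    (hcard : #s ≤ #t) (hc : ∀ y ∈ t \ s, 0 ≤ c y) (hle : ∀ x ∈ s \ t, ∀ y ∈ t \ s, c x ≤ c y) :
    ∑ x ∈ s, c x ≤ ∑ x ∈ t, c x := by
  rw [← sum_inter_add_sum_sdiff s t c, ← sum_inter_add_sum_sdiff t s c, inter_comm t s]
  gcongr ?_ + ?_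
  · exact le_rfl
  have hcard' : #(s \ t) ≤ #(t \ s) := by
    have := card_inter_add_card_sdiff s t
    have := card_inter_add_card_sdiff t s
    rw [inter_comm t s] at this
    omega
  obtain hempty | hne := (s \ t).eq_empty_or_nonempty
  · rw [hempty, sum_empty]
    exact sum_nonneg hc
  obtain ⟨y₀, hy₀, hy₀_min⟩ :=
    (t \ s).exists_min_image c (card_pos.1 ((card_pos.2 hne).trans_le hcard'))
  calc ∑ x ∈ s \ t, c x
      ≤ #(s \ t) • c y₀ := sum_le_card_nsmul _ _ _ fun x hx => hle x hx y₀ hy₀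
    _ ≤ #(t \ s) • c y₀ := nsmul_le_nsmul_left (hc y₀ hy₀) hcard'
    _ ≤ ∑ x ∈ t \ s, c x := card_nsmul_le_sum _ _ _ hy₀_min

section Removal

variable {ι M : Type*} [Fintype ι]

/-- `(i, y)` stands for the `y`-th unit of coordinate `i`. -/
def removedBlocks (B Z : ι → ℕ) : Finset (Σ _ : ι, ℕ) :=
  univ.sigma fun i => Ioc (Z i) (B i)

def removalCost [AddCommMonoid M] (m : ι → ℕ → M) (B Z : ι → ℕ) : M :=
  ∑ i, ∑ y ∈ Ioc (Z i) (B i), m i y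

def RemovedLeKept [LE M] (m : ι → ℕ → M) (B Y : ι → ℕ) : Prop :=
  ∀ ⦃i y⦄, Y i < y → y ≤ B i → ∀ ⦃i' y'⦄, 0 < y' → y' ≤ Y i' → m i y ≤ m i' y'

lemma removalCost_eq_sum_removedBlocks [AddCommMonoid M] (m : ι → ℕ → M) (B Z : ι → ℕ) :
    removalCost m B Z = ∑ p ∈ removedBlocks B Z, m p.1 p.2 := by
  rw [removalCost, removedBlocks, sum_sigma]

lemma card_removedBlocks_add_sum {B Z : ι → ℕ} (hZ : Z ≤ B) :
    #(removedBlocks B Z) + ∑ i, Z i = ∑ i, B i := by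
  rw [removedBlocks, card_sigma, ← sum_add_distrib]
  exact sum_congr rfl fun i _ => by rw [Nat.card_Ioc, Nat.sub_add_cancel (hZ i)]

lemma removalCost_le_of_removedLeKept [AddCommMonoid M] [LinearOrder M] [IsOrderedAddMonoid M]
    {m : ι → ℕ → M} (hm : ∀ i y, 0 ≤ m i y) {B Y Z : ι → ℕ} (hY : Y ≤ B) (hZ : Z ≤ B)
    (hsum : ∑ i, Z i ≤ ∑ i, Y i) (hYm : RemovedLeKept m B Y) :
    removalCost m B Y ≤ removalCost m B Z := by
  classical
  rw [removalCost_eq_sum_removedBlocks, removalCost_eq_sum_removedBlocks]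
  refine sum_le_sum_of_card_le_of_forall_sdiff_le ?_ (fun p _ => hm p.1 p.2) ?_
  · have := card_removedBlocks_add_sum hY
    have := card_removedBlocks_add_sum hZ
    omega
  · rintro ⟨i, y⟩ hiy ⟨i', y'⟩ hiy'
    simp only [removedBlocks, mem_sdiff, mem_sigma, mem_univ, mem_Ioc, true_and, not_and,
      not_le] at hiy hiy'
    exact hYm (i' := i') (y' := y') hiy.1.1 hiy.1.2 (by omega) (by omega)

end Removal

section Greedy

variable {ι α : Type*} [DecidableEq ι]

def IsGreedyStep [LE α] (m : ι → ℕ → α) (Y Y' : ι → ℕ) : Prop :=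
  ∃ j, 1 ≤ Y j ∧ (∀ j', 1 ≤ Y j' → m j (Y j) ≤ m j' (Y j')) ∧
    Y' = Function.update Y j (Y j - 1)

namespace IsGreedyStep

variable [LE α] {m : ι → ℕ → α} {Y Y' : ι → ℕ}

lemma le (h : IsGreedyStep m Y Y') : Y' ≤ Y := by
  obtain ⟨j, -, -, rfl⟩ := h
  intro i
  rcases eq_or_ne i j with rfl | hij
  · simp
  · simp [hij]

lemma sum_add_one [Fintype ι] (h : IsGreedyStep m Y Y') : ∑ i, Y' i + 1 = ∑ i, Y i := by
  obtain ⟨j, hj, -, rfl⟩ := h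
  rw [sum_update_of_mem (mem_univ j), ← sum_erase_add _ _ (mem_univ j),
    ← sdiff_singleton_eq_erase]
  omega

end IsGreedyStep

lemma IsGreedyStep.removedLeKept [Preorder α] {m : ι → ℕ → α} (hm : ∀ i, Antitone (m i))
    {B Y Y' : ι → ℕ} (h : IsGreedyStep m Y Y') (hY : RemovedLeKept m B Y) :
    RemovedLeKept m B Y' := by
  intro i y hy hyB i' y' hy' hy'Y
  have hkept : y' ≤ Y i' := hy'Y.trans (h.le i')
  obtain ⟨j, -, hmin, rfl⟩ := h
  by_cases hold : Y i < y
  · exact hY hold hyB hy' hkept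
  obtain rfl : i = j := by
    by_contra hij
    rw [Function.update_of_ne hij] at hy
    exact hold hy
  obtain rfl : y = Y i := by
    rw [Function.update_self] at hy
    omega
  exact (hmin i' (hy'.trans_le hkept)).trans (hm i' hkept)

variable [Preorder α] {m : ι → ℕ → α} {B : ι → ℕ} {Y : ℕ → ι → ℕ} {K : ℕ}

lemma greedy_le_start (hY0 : Y 0 = B)
    (hstep : ∀ k < K, IsGreedyStep m (Y k) (Y (k + 1))) :
    ∀ k ≤ K, Y k ≤ B := by
  intro k hk
  induction k with
  | zero => exact hY0.le
  | succ k ih => exact ((hstep k hk).le).trans (ih (by omega))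

lemma greedy_sum_add [Fintype ι] (hY0 : Y 0 = B)
    (hstep : ∀ k < K, IsGreedyStep m (Y k) (Y (k + 1))) :
    ∀ k ≤ K, ∑ i, Y k i + k = ∑ i, B i := by
  intro k hk
  induction k with
  | zero => simp [hY0]
  | succ k ih =>
    have := (hstep k hk).sum_add_one
    have := ih (by omega)
    omega

lemma greedy_removedLeKept (hm : ∀ i, Antitone (m i)) (hY0 : Y 0 = B)
    (hstep : ∀ k < K, IsGreedyStep m (Y k) (Y (k + 1))) :
    ∀ k ≤ K, RemovedLeKept m B (Y k) := by
  intro k hk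
  induction k with
  | zero => intro i y hy hyB; rw [hY0] at hy; omega
  | succ k ih => exact (hstep k hk).removedLeKept hm (ih (by omega))

end Greedy

section ExpectedTail

variable {n : ℕ} {Ω : Type*} [MeasurableSpace Ω] {μ : Measure Ω}
  {lam : Fin n → ℝ} {L : Fin n → ℤ} {ξ : ℤ} {Q : Fin n → Ω → ℤ}

lemma marg_nonneg (hlam : ∀ i, 0 ≤ lam i) (i : Fin n) (y : ℕ) : 0 ≤ marg μ lam L ξ Q i y :=
  mul_nonneg (hlam i) ENNReal.toReal_nonneg

lemma marg_antitone [IsFiniteMeasure μ] (hlam : ∀ i, 0 ≤ lam i) (i : Fin n) :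
    Antitone (marg μ lam L ξ Q i) :=
  fun _ _ hy => mul_le_mul_of_nonneg_left
    (measureReal_mono fun _ hω => (Int.ofNat_le.2 hy).trans hω) (hlam i)

lemma etObj_eq_add_removalCost [IsFiniteMeasure μ] (hQ : ∀ i, Measurable (Q i))
    (hint : ∀ (i : Fin n) (y : ℤ),
      Integrable (fun ω => ((max (L i + Q i ω - y - ξ) 0 : ℤ) : ℝ)) μ)
    {B Z : Fin n → ℕ} (hZ : Z ≤ B) :
    etObj μ lam L ξ Q Z = etObj μ lam L ξ Q B + removalCost (marg μ lam L ξ Q) B Z := by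
  simp only [etObj, removalCost, marg, sub_right_comm _ _ ξ] at hint ⊢
  rw [← sum_add_distrib]
  refine sum_congr rfl fun i _ => ?_
  rw [integral_posPart_sub_eq_add_sum (by fun_prop) (hint i) (hZ i), mul_add, mul_sum]
  rfl

end ExpectedTail

theorem stmt_6_general {n : ℕ} {Ω : Type*} [MeasurableSpace Ω] (μ : Measure Ω)
    [IsProbabilityMeasure μ]
    (lam : Fin n → ℝ) (hlam : ∀ i, 0 < lam i)
    (L : Fin n → ℤ) (ξ : ℤ)
    (Q : Fin n → Ω → ℤ) (hQ : ∀ i, Measurable (Q i))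
    (hint : ∀ (i : Fin n) (y : ℤ),
      Integrable (fun ω => ((max (L i + Q i ω - y - ξ) 0 : ℤ) : ℝ)) μ)
    (B : Fin n → ℕ) (C : ℕ)
    -- the greedy trajectory: `K` decrement steps starting from `B`
    (K : ℕ) (hK : K = (∑ i, B i) - C)
    (Y : ℕ → Fin n → ℕ) (hY0 : Y 0 = B)
    (hstep : ∀ k < K, ∃ j : Fin n, 1 ≤ Y k j ∧
      (∀ j' : Fin n, 1 ≤ Y k j' →
        marg μ lam L ξ Q j (Y k j) ≤ marg μ lam L ξ Q j' (Y k j')) ∧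
      Y (k + 1) = Function.update (Y k) j (Y k j - 1)) :
    (∀ i, Y K i ≤ B i) ∧ (∑ i, Y K i ≤ C) ∧
      ∀ Z : Fin n → ℕ, (∀ i, Z i ≤ B i) → (∑ i, Z i ≤ C) →
        etObj μ lam L ξ Q (Y K) ≤ etObj μ lam L ξ Q Z := by
  have hlam' : ∀ i, 0 ≤ lam i := fun i => (hlam i).le
  have hYB : Y K ≤ B := greedy_le_start hY0 hstep K le_rfl
  have hYsum : ∑ i, Y K i + K = ∑ i, B i := greedy_sum_add hY0 hstep K le_rfl
  refine ⟨hYB, by omega, fun Z hZB hZC => ?_⟩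
  have hZsum : ∑ i, Z i ≤ ∑ i, B i := sum_le_sum fun i _ => hZB i
  rw [etObj_eq_add_removalCost hQ hint hZB, etObj_eq_add_removalCost hQ hint hYB]
  gcongr
  exact removalCost_le_of_removedLeKept (marg_nonneg hlam') hYB hZB (by omega)
    (greedy_removedLeKept (marg_antitone hlam') hY0 hstep K le_rfl)

/-- The greedy procedure that starts from the upper bounds `B` and repeatedly
decrements a coordinate of minimal marginal value `λ_j P(L_j + Q_j - ξ ≥ Y_j)`
(among positive coordinates) until the capacity constraint holds, returns an
optimal solution of `min Σ_i λ_i E[(L_i + Q_i - Y_i - ξ)⁺]` s.t. `0 ≤ Y ≤ B`,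
`Σ_i Y_i ≤ C`. -/
theorem stmt_6 {n : ℕ} {Ω : Type*} [MeasurableSpace Ω] (μ : Measure Ω)
    [IsProbabilityMeasure μ]
    (lam : Fin n → ℝ) (hlam : ∀ i, 0 < lam i)
    (L : Fin n → ℤ) (hL : ∀ i, 0 ≤ L i) (ξ : ℤ) (hξ : 0 ≤ ξ)
    (Q : Fin n → Ω → ℤ) (hQ : ∀ i, Measurable (Q i))
    (hint : ∀ (i : Fin n) (y : ℤ),
      Integrable (fun ω => ((max (L i + Q i ω - y - ξ) 0 : ℤ) : ℝ)) μ)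
    (B : Fin n → ℕ) (C : ℕ)
    -- the greedy trajectory: `K` decrement steps starting from `B`
    (K : ℕ) (hK : K = (∑ i, B i) - C)
    (Y : ℕ → Fin n → ℕ) (hY0 : Y 0 = B)
    (hstep : ∀ k < K, ∃ j : Fin n, 1 ≤ Y k j ∧
      (∀ j' : Fin n, 1 ≤ Y k j' →
        marg μ lam L ξ Q j (Y k j) ≤ marg μ lam L ξ Q j' (Y k j')) ∧
      Y (k + 1) = Function.update (Y k) j (Y k j - 1)) :
    (∀ i, Y K i ≤ B i) ∧ (∑ i, Y K i ≤ C) ∧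
      ∀ Z : Fin n → ℕ, (∀ i, Z i ≤ B i) → (∑ i, Z i ≤ C) →
        etObj μ lam L ξ Q (Y K) ≤ etObj μ lam L ξ Q Z :=
  stmt_6_general μ lam hlam L ξ Q hQ hint B C K hK Y hY0 hstep
end

section
/- Let Y* be feasible for: minimize Σ_i λ_i E[(L_i + Q_i − Y_i − ξ)^+] subject to 0 ≤ Y_i ≤ B_i integer and Σ_i Y_i ≤ C. If there exist indices i ≠ j with Y*_j ≥ 1, Y*_i ≤ B_i − 1, and λ_i P(L_i + Q_i − ξ ≥ Y*_i + 1) > λ_j P(L_j + Q_j − ξ ≥ Y*_j), then Y* is not optimal: the exchange Y'_i = Y*_i + 1, Y'_j = Y*_j − 1 (other coordinates unchanged) strictly decreases the objective. -/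
/-!
Moving one unit from class `j` to class `i` changes only two summands of the objective. For an
integer-valued `Z`, `(Z - y)⁺ - (Z - (y + 1))⁺` is the indicator of `Z ≥ y + 1`, so
`E[(Z - y)⁺] - E[(Z - (y + 1))⁺] = P(Z ≥ y + 1)`: the `i`-summand drops by
`λ_i P(Z_i ≥ Y_i + 1)` and the `j`-summand rises by `λ_j P(Z_j ≥ Y_j)`, where `Z_k = L_k + Q_k - ξ`.
-/

open MeasureTheory
open scoped BigOperators

lemma Int.cast_max_sub_zero_sub_max_sub_succ_zero (z y : ℤ) :
    (((max (z - y) 0 : ℤ) : ℝ) - ((max (z - (y + 1)) 0 : ℤ) : ℝ)) =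
      if y + 1 ≤ z then 1 else 0 := by
  rw [← Int.cast_sub]
  split_ifs with h
  · exact_mod_cast (by omega : max (z - y) 0 - max (z - (y + 1)) 0 = 1)
  · exact_mod_cast (by omega : max (z - y) 0 - max (z - (y + 1)) 0 = 0)

lemma integral_max_sub_zero_sub_integral_max_sub_succ_zero {Ω : Type*} [MeasurableSpace Ω]
    {μ : Measure Ω} {Z : Ω → ℤ} (hZ : Measurable Z) (y : ℤ)
    (h₀ : Integrable (fun ω => ((max (Z ω - y) 0 : ℤ) : ℝ)) μ)
    (h₁ : Integrable (fun ω => ((max (Z ω - (y + 1)) 0 : ℤ) : ℝ)) μ) :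
    (∫ ω, ((max (Z ω - y) 0 : ℤ) : ℝ) ∂μ) - ∫ ω, ((max (Z ω - (y + 1)) 0 : ℤ) : ℝ) ∂μ =
      (μ {ω | y + 1 ≤ Z ω}).toReal := by
  have hset : MeasurableSet {ω | y + 1 ≤ Z ω} := hZ measurableSet_Ici
  have hind : (fun ω => if y + 1 ≤ Z ω then (1 : ℝ) else 0) =
      Set.indicator {ω | y + 1 ≤ Z ω} (fun _ => 1) := by
    ext ω
    simp [Set.indicator_apply]
  rw [← integral_sub h₀ h₁]
  simp_rw [Int.cast_max_sub_zero_sub_max_sub_succ_zero]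
  rw [hind, integral_indicator_const _ hset, smul_eq_mul, mul_one, measureReal_def]

section Objective

variable {n : ℕ} {Ω : Type*} [MeasurableSpace Ω] {μ : Measure Ω}
  {lam : Fin n → ℝ} {L : Fin n → ℤ} {ξ : ℤ} {Q : Fin n → Ω → ℤ}

lemma etObj_update_sub (Y : Fin n → ℕ) (k : Fin n) (v : ℕ) :
    etObj μ lam L ξ Q (Function.update Y k v) - etObj μ lam L ξ Q Y =
      lam k * ((∫ ω, ((max (L k + Q k ω - (v : ℤ) - ξ) 0 : ℤ) : ℝ) ∂μ) -
        ∫ ω, ((max (L k + Q k ω - (Y k : ℤ) - ξ) 0 : ℤ) : ℝ) ∂μ) := by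
  rw [etObj, etObj, ← Finset.sum_sub_distrib, Finset.sum_eq_single k]
  · rw [Function.update_self, mul_sub]
  · intro m _ hm
    rw [Function.update_of_ne hm, sub_self]
  · exact fun hk => absurd (Finset.mem_univ k) hk

lemma etObj_update_succ (Y : Fin n → ℕ) (k : Fin n) (hQ : Measurable (Q k))
    (hint : ∀ y : ℤ, Integrable (fun ω => ((max (L k + Q k ω - y - ξ) 0 : ℤ) : ℝ)) μ) :
    etObj μ lam L ξ Q (Function.update Y k (Y k + 1)) =
      etObj μ lam L ξ Q Y - lam k * (μ {ω | (Y k : ℤ) + 1 ≤ L k + Q k ω - ξ}).toReal := by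
  have hZ : Measurable fun ω => L k + Q k ω - ξ := by fun_prop
  have hshift : ∀ (y : ℤ) ω, L k + Q k ω - y - ξ = (L k + Q k ω - ξ) - y :=
    fun _ _ => sub_right_comm _ _ _
  have hmarg := integral_max_sub_zero_sub_integral_max_sub_succ_zero hZ (Y k)
    (by simpa only [hshift] using hint (Y k)) (by simpa only [hshift] using hint (Y k + 1))
  have hupd := etObj_update_sub (μ := μ) (lam := lam) (L := L) (ξ := ξ) (Q := Q) Y k (Y k + 1)
  simp only [hshift, Nat.cast_succ] at hupd
  rw [← hmarg]
  linear_combination hupd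

lemma etObj_update_pred (Y : Fin n → ℕ) (k : Fin n) (hk : 1 ≤ Y k) (hQ : Measurable (Q k))
    (hint : ∀ y : ℤ, Integrable (fun ω => ((max (L k + Q k ω - y - ξ) 0 : ℤ) : ℝ)) μ) :
    etObj μ lam L ξ Q (Function.update Y k (Y k - 1)) =
      etObj μ lam L ξ Q Y + lam k * (μ {ω | (Y k : ℤ) ≤ L k + Q k ω - ξ}).toReal := by
  have hsucc := etObj_update_succ (μ := μ) (lam := lam) (Function.update Y k (Y k - 1)) k hQ hint
  have hcast : ((Y k - 1 : ℕ) : ℤ) + 1 = Y k := by omega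
  rw [Function.update_self, Function.update_idem, Nat.sub_add_cancel hk,
    Function.update_eq_self, hcast] at hsucc
  linarith

end Objective

theorem stmt_7_general {n : ℕ} {Ω : Type*} [MeasurableSpace Ω] (μ : Measure Ω)
    (lam : Fin n → ℝ)
    (L : Fin n → ℤ) (ξ : ℤ)
    (Q : Fin n → Ω → ℤ) (hQ : ∀ i, Measurable (Q i))
    (hint : ∀ (i : Fin n) (y : ℤ),
      Integrable (fun ω => ((max (L i + Q i ω - y - ξ) 0 : ℤ) : ℝ)) μ)
    (Ystar : Fin n → ℕ)
    (i j : Fin n) (hij : i ≠ j) (hj1 : 1 ≤ Ystar j)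
    (hswap : lam j * (μ {ω | (Ystar j : ℤ) ≤ L j + Q j ω - ξ}).toReal <
      lam i * (μ {ω | (Ystar i : ℤ) + 1 ≤ L i + Q i ω - ξ}).toReal) :
    etObj μ lam L ξ Q
        (Function.update (Function.update Ystar i (Ystar i + 1)) j (Ystar j - 1)) <
      etObj μ lam L ξ Q Ystar := by
  set Y₁ := Function.update Ystar i (Ystar i + 1) with hY₁
  have hY₁j : Y₁ j = Ystar j := Function.update_of_ne hij.symm _ _
  have hpred := etObj_update_pred (μ := μ) (lam := lam) Y₁ j (hY₁j ▸ hj1) (hQ j) (hint j)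
  rw [hY₁j] at hpred
  rw [hpred, hY₁, etObj_update_succ Ystar i (hQ i) (hint i)]
  linarith

/-- Exchange argument: if `λ_i P(L_i + Q_i - ξ ≥ Y*_i + 1) > λ_j P(L_j + Q_j - ξ ≥ Y*_j)`
with `Y*_j ≥ 1` and `Y*_i ≤ B_i - 1`, then moving one cached block from `j` to `i`
strictly decreases the objective, so `Y*` is not optimal. -/
theorem stmt_7 {n : ℕ} {Ω : Type*} [MeasurableSpace Ω] (μ : Measure Ω)
    [IsProbabilityMeasure μ]
    (lam : Fin n → ℝ) (hlam : ∀ i, 0 < lam i)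
    (L : Fin n → ℤ) (hL : ∀ i, 0 ≤ L i) (ξ : ℤ) (hξ : 0 ≤ ξ)
    (Q : Fin n → Ω → ℤ) (hQ : ∀ i, Measurable (Q i))
    (hint : ∀ (i : Fin n) (y : ℤ),
      Integrable (fun ω => ((max (L i + Q i ω - y - ξ) 0 : ℤ) : ℝ)) μ)
    (B : Fin n → ℕ) (C : ℕ)
    (Ystar : Fin n → ℕ) (hfeas₁ : ∀ i, Ystar i ≤ B i) (hfeas₂ : ∑ i, Ystar i ≤ C)
    (i j : Fin n) (hij : i ≠ j) (hj1 : 1 ≤ Ystar j) (hiB : Ystar i ≤ B i - 1)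
    (hswap : lam j * (μ {ω | (Ystar j : ℤ) ≤ L j + Q j ω - ξ}).toReal <
      lam i * (μ {ω | (Ystar i : ℤ) + 1 ≤ L i + Q i ω - ξ}).toReal) :
    etObj μ lam L ξ Q
        (Function.update (Function.update Ystar i (Ystar i + 1)) j (Ystar j - 1)) <
      etObj μ lam L ξ Q Ystar :=
  stmt_7_general μ lam L ξ Q hQ hint Ystar i j hij hj1 hswap
end
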